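/- Let f : X → Y be a mapping between normed spaces, with Y partially ordered by a convex cone Y₊, and let x̄ ∈ X. Suppose that f is Y₊-convex and that 0 ∈ int ∂(y*∘f)(x̄) for some y* in the dual unit sphere S* with y* ∈ Y₊* (the interior taken in X*). Then f is strongly metrically subregular at x̄, and subreg f(x̄) ≤ 1 / intrad f(x̄), where intrad f(x̄) = sup{ρ > 0 : ρB* ⊆ ∂(y*∘f)(x̄) for some y* ∈ S* ∩ Y₊*}. -/

import Mathlib

open Filter Topology Metric Set

/-- Strong metric subregularity of a single-valued map between normed spaces at `xb`. -/
def IsStronglyMetricallySubregularMap {X Y : Type*}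
    [NormedAddCommGroup X] [NormedAddCommGroup Y] (f : X → Y) (xb : X) : Prop :=
  ∃ κ : ℝ, 0 ≤ κ ∧ ∃ r : ℝ, 0 < r ∧ ∀ x ∈ Metric.closedBall xb r,
    ‖x - xb‖ ≤ κ * ‖f x - f xb‖

/-- The modulus of subregularity of a single-valued map. -/
noncomputable def subregModMap {X Y : Type*}
    [NormedAddCommGroup X] [NormedAddCommGroup Y] (f : X → Y) (xb : X) : ℝ :=
  sInf {κ : ℝ | 0 ≤ κ ∧ ∃ r : ℝ, 0 < r ∧ ∀ x ∈ Metric.closedBall xb r,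
    ‖x - xb‖ ≤ κ * ‖f x - f xb‖}

/-- The convex subdifferential of a real-valued function `ψ` at `xb`. -/
def convexSubdiffR {X : Type*} [NormedAddCommGroup X] [NormedSpace ℝ X]
    (ψ : X → ℝ) (xb : X) : Set (StrongDual ℝ X) :=
  {p | ∀ x : X, ψ xb + p (x - xb) ≤ ψ x}

/-- `intrad f(xb) = sup{ρ > 0 : ρ·B* ⊆ ∂(y*∘f)(xb) for some y* ∈ S* ∩ Y₊*}`. -/
noncomputable def intrad {X Y : Type*}
    [NormedAddCommGroup X] [NormedSpace ℝ X] [NormedAddCommGroup Y] [NormedSpace ℝ Y]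
    (C : Set Y) (f : X → Y) (xb : X) : ℝ :=
  sSup {ρ : ℝ | 0 < ρ ∧ ∃ q : StrongDual ℝ Y, ‖q‖ = 1 ∧ (∀ y ∈ C, 0 ≤ q y) ∧
    ∀ p : StrongDual ℝ X, ‖p‖ ≤ ρ → p ∈ convexSubdiffR (fun x => q (f x)) xb}

/-! If `ρB* ⊆ ∂(y*∘f)(x̄)` with `‖y*‖ ≤ 1`, testing the subgradient inequality against a norming
functional of `x - x̄` scaled to norm `ρ` gives the global growth bound
`ρ ‖x - x̄‖ ≤ y*(f x - f x̄) ≤ ‖f x - f x̄‖`. Taking the supremum over all admissible `ρ` gives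
`‖x - x̄‖ ≤ intrad⁻¹ ‖f x - f x̄‖` on all of `X`; when the admissible `ρ` are unbounded, `X` is
the single point `x̄` and `intrad = 0` is the junk value `sSup` of an unbounded set. -/

theorem Real.le_inv_sSup_mul {s : Set ℝ} {a b : ℝ} (hs : ∃ ρ ∈ s, 0 < ρ) (ha : 0 ≤ a)
    (h : ∀ ρ ∈ s, ρ * a ≤ b) : a ≤ (sSup s)⁻¹ * b := by
  obtain ⟨ρ₀, hρ₀, hρ₀_pos⟩ := hs
  by_cases hbdd : BddAbove s
  · have hsup_pos : 0 < sSup s := hρ₀_pos.trans_le (le_csSup hbdd hρ₀)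
    rw [inv_mul_eq_div, le_div_iff₀ hsup_pos, mul_comm]
    rcases ha.eq_or_lt with rfl | ha
    · simpa using h ρ₀ hρ₀
    · rw [← le_div_iff₀ ha]
      exact csSup_le ⟨ρ₀, hρ₀⟩ fun ρ hρ => (le_div_iff₀ ha).2 (h ρ hρ)
  · rw [Real.sSup_of_not_bddAbove hbdd, inv_zero, zero_mul]
    by_contra! ha_pos
    exact hbdd ⟨b / a, fun ρ hρ => (le_div_iff₀ ha_pos).2 (h ρ hρ)⟩

section

variable {X Y : Type*} [NormedAddCommGroup X] [NormedAddCommGroup Y]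

theorem subregModMap_le {f : X → Y} {xb : X} {κ r : ℝ} (hκ : 0 ≤ κ) (hr : 0 < r)
    (h : ∀ x ∈ closedBall xb r, ‖x - xb‖ ≤ κ * ‖f x - f xb‖) : subregModMap f xb ≤ κ :=
  csInf_le ⟨0, fun _ hκ' => hκ'.1⟩ ⟨hκ, r, hr, h⟩

variable [NormedSpace ℝ X]

theorem add_mul_norm_sub_le_of_closedBall_subset_convexSubdiffR {ψ : X → ℝ} {xb : X} {ρ : ℝ}
    (hρ : 0 ≤ ρ) (h : closedBall 0 ρ ⊆ convexSubdiffR ψ xb) (x : X) :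
    ψ xb + ρ * ‖x - xb‖ ≤ ψ x := by
  obtain ⟨g, hg_norm, hg⟩ := exists_dual_vector'' ℝ (x - xb)
  have hρg : ρ • g ∈ closedBall (0 : StrongDual ℝ X) ρ := by
    rw [mem_closedBall_zero_iff, norm_smul, Real.norm_of_nonneg hρ]
    exact mul_le_of_le_one_right hρ hg_norm
  simpa [hg] using h hρg x

variable [NormedSpace ℝ Y]

theorem mul_norm_sub_le_norm_sub_of_closedBall_subset_convexSubdiffR {f : X → Y} {xb : X}
    {q : StrongDual ℝ Y} {ρ : ℝ} (hq : ‖q‖ ≤ 1) (hρ : 0 ≤ ρ)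
    (h : closedBall 0 ρ ⊆ convexSubdiffR (fun x => q (f x)) xb) (x : X) :
    ρ * ‖x - xb‖ ≤ ‖f x - f xb‖ := by
  have hgrowth := add_mul_norm_sub_le_of_closedBall_subset_convexSubdiffR hρ h x
  calc ρ * ‖x - xb‖ ≤ q (f x - f xb) := by rw [map_sub]; linarith
    _ ≤ ‖q‖ * ‖f x - f xb‖ := (Real.le_norm_self _).trans (q.le_opNorm _)
    _ ≤ ‖f x - f xb‖ := mul_le_of_le_one_left (norm_nonneg _) hq

theorem norm_sub_le_inv_intrad_mul {C : Set Y} {f : X → Y} {xb : X}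
    (hq : ∃ q : StrongDual ℝ Y, ‖q‖ = 1 ∧ (∀ y ∈ C, 0 ≤ q y) ∧
      (0 : StrongDual ℝ X) ∈ interior (convexSubdiffR (fun x => q (f x)) xb)) (x : X) :
    ‖x - xb‖ ≤ (intrad C f xb)⁻¹ * ‖f x - f xb‖ := by
  obtain ⟨q, hq_norm, hqC, hq_int⟩ := hq
  obtain ⟨ε, hε, hball⟩ := Metric.mem_nhds_iff.1 (mem_interior_iff_mem_nhds.1 hq_int)
  refine Real.le_inv_sSup_mul ⟨ε / 2, ⟨half_pos hε, q, hq_norm, hqC, fun p hp => ?_⟩, half_pos hε⟩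
    (norm_nonneg _) ?_
  · exact hball (closedBall_subset_ball (half_lt_self hε) (mem_closedBall_zero_iff.2 hp))
  · rintro ρ ⟨hρ, q', hq'_norm, -, hsub⟩
    exact mul_norm_sub_le_norm_sub_of_closedBall_subset_convexSubdiffR hq'_norm.le hρ.le
      (fun p hp => hsub p (mem_closedBall_zero_iff.1 hp)) x

end

theorem strong_subreg_of_scalarization_general {X Y : Type*}
    [NormedAddCommGroup X] [NormedSpace ℝ X] [NormedAddCommGroup Y] [NormedSpace ℝ Y]
    (C : Set Y)
    (f : X → Y) (xb : X)
    (hq : ∃ q : StrongDual ℝ Y, ‖q‖ = 1 ∧ (∀ y ∈ C, 0 ≤ q y) ∧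
      (0 : StrongDual ℝ X) ∈ interior (convexSubdiffR (fun x => q (f x)) xb)) :
    IsStronglyMetricallySubregularMap f xb ∧
    subregModMap f xb ≤ 1 / intrad C f xb := by
  have hκ : 0 ≤ (intrad C f xb)⁻¹ := inv_nonneg.2 (Real.sSup_nonneg fun _ hρ => hρ.1.le)
  have hbound : ∀ x ∈ closedBall xb 1, ‖x - xb‖ ≤ (intrad C f xb)⁻¹ * ‖f x - f xb‖ :=
    fun x _ => norm_sub_le_inv_intrad_mul hq x
  rw [one_div]
  exact ⟨⟨_, hκ, 1, one_pos, hbound⟩, subregModMap_le hκ one_pos hbound⟩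

/-- If `f : X → Y` is `Y₊`-convex (w.r.t. a convex cone `C = Y₊`) and
`0 ∈ int ∂(y*∘f)(xb)` for some `y*` in the dual unit sphere with `y* ∈ Y₊*`, then `f`
is strongly metrically subregular at `xb` and `subreg f(xb) ≤ 1/intrad f(xb)`. -/
theorem strong_subreg_of_scalarization {X Y : Type*}
    [NormedAddCommGroup X] [NormedSpace ℝ X] [NormedAddCommGroup Y] [NormedSpace ℝ Y]
    (C : Set Y) (hCconv : Convex ℝ C) (hCcone : ∀ c : ℝ, 0 < c → ∀ y ∈ C, c • y ∈ C)
    (f : X → Y) (xb : X)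
    (hfconv : ∀ x₁ x₂ : X, ∀ t : ℝ, 0 ≤ t → t ≤ 1 →
      t • f x₁ + (1 - t) • f x₂ - f (t • x₁ + (1 - t) • x₂) ∈ C)
    (hq : ∃ q : StrongDual ℝ Y, ‖q‖ = 1 ∧ (∀ y ∈ C, 0 ≤ q y) ∧
      (0 : StrongDual ℝ X) ∈ interior (convexSubdiffR (fun x => q (f x)) xb)) :
    IsStronglyMetricallySubregularMap f xb ∧
    subregModMap f xb ≤ 1 / intrad C f xb :=
  strong_subreg_of_scalarization_general C f xb hq
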